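/- Let g : ℝ² → ℝ be continuously differentiable with g(i, 0) = q_i and ∇g(i, 0) = (1/i, 1/i) for every positive integer i, and with ∂g/∂y(x, y) > 0 for all (x, y) ∈ ℝ². Then g has no critical point, yet for every real s ≥ 0 there exists a sequence (z_j) in ℝ² with |z_j| → +∞, g(z_j) → s and ∇g(z_j) → (0,0) (a non-converging Palais–Smale sequence for g at level s). -/

import Mathlib

open MeasureTheory Filter Topology

noncomputable section

namespace Paper

/-- `ℝ^N` as a Euclidean space. -/
abbrev Euc (N : ℕ) := EuclideanSpace ℝ (Fin N)

/-- The last coordinate `x_N` of a point `x ∈ ℝ^N`. -/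
def lastCoord (N : ℕ) (x : Euc N) : ℝ :=
  if h : 0 < N then x ⟨N - 1, Nat.sub_lt h one_pos⟩ else 0

/-- The norm `|x'|` of the first `N-1` coordinates of `x ∈ ℝ^N`. -/
def primeNorm (N : ℕ) (x : Euc N) : ℝ :=
  Real.sqrt (∑ j : Fin N, if (j : ℕ) < N - 1 then (x j) ^ 2 else 0)

/-- The point `(0, …, 0, t)` on the `x_N`-axis. -/
def axisPt (N : ℕ) (t : ℝ) : Euc N :=
  WithLp.toLp 2 (fun j => if (j : ℕ) = N - 1 then t else 0)

/-- A `C_c^∞` test function on `ℝ^N`. -/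
def IsTestFun {N : ℕ} (φ : Euc N → ℝ) : Prop :=
  ContDiff ℝ (⊤ : ℕ∞) φ ∧ HasCompactSupport φ

/-- The `L^p` norm `|u|_p = (∫ |u|^p)^{1/p}`. -/
def pnorm {N : ℕ} (p : ℝ) (u : Euc N → ℝ) : ℝ :=
  (∫ x, |u x| ^ p) ^ (1 / p)

/-- `‖u‖² = ∫ (|g|² + u²)`, for `u` with weak gradient `g`. -/
def energy {N : ℕ} (u : Euc N → ℝ) (g : Euc N → Euc N) : ℝ :=
  ∫ x, (‖g x‖ ^ 2 + (u x) ^ 2)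

/-- `(u, g)` is an `H¹` function with weak gradient `g`. -/
def IsH1 {N : ℕ} (u : Euc N → ℝ) (g : Euc N → Euc N) : Prop :=
  LocallyIntegrable u volume ∧ LocallyIntegrable g volume ∧
  Integrable (fun x => ‖g x‖ ^ 2 + (u x) ^ 2) volume ∧
  ∀ φ : Euc N → ℝ, IsTestFun φ → ∀ i : Fin N,
    ∫ x, u x * fderiv ℝ φ x (EuclideanSpace.single i 1) = - ∫ x, (g x i) * φ x

/-- `u ∈ H¹₀(D)`, with weak gradient `g`. -/
def MemH10 {N : ℕ} (D : Set (Euc N)) (u : Euc N → ℝ) (g : Euc N → Euc N) : Prop :=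
  IsH1 u g ∧ ∃ uk : ℕ → Euc N → ℝ,
    (∀ k, IsTestFun (uk k) ∧ tsupport (uk k) ⊆ D) ∧
    Tendsto (fun k => ∫ x, (‖gradient (uk k) x - g x‖ ^ 2 + (uk k x - u x) ^ 2))
      atTop (𝓝 0)

/-- `m = inf { ∫ (|∇u|² + u²) : u ∈ C_c^∞(ℝ^N), |u|_p = 1 }`. -/
def mconst (N : ℕ) (p : ℝ) : ℝ :=
  sInf { c | ∃ u : Euc N → ℝ, IsTestFun u ∧ pnorm p u = 1 ∧
    c = ∫ x, (‖gradient u x‖ ^ 2 + (u x) ^ 2) }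

/-- The strip `{ x : |x_N - t| < q/2 }`; `S_q = strip N q 0`. -/
def strip (N : ℕ) (q t : ℝ) : Set (Euc N) :=
  { x | |lastCoord N x - t| < q / 2 }

/-- `i ↦ q_i` is a bijection from the positive integers onto the positive rationals. -/
def QBij (q : ℕ → ℚ) : Prop :=
  (∀ i, 1 ≤ i → 0 < q i) ∧ ∀ r : ℚ, 0 < r → ∃! i, 1 ≤ i ∧ q i = r

/-- The domain `Ω`. -/
def omegaSet (N : ℕ) (q : ℕ → ℚ) : Set (Euc N) :=
  { x | primeNorm N x < 1 } ∪ strip N (q 1) 0 ∪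
    ⋃ i ∈ { i : ℕ | 2 ≤ i },
      strip N (q i) ((i : ℝ) + (∑ j ∈ Finset.Icc 1 (i - 1), (q j : ℝ)) + (q i : ℝ) / 2)

/-- The height of the point `Q_i^-`. -/
def qMinusHt (q : ℕ → ℚ) (i : ℕ) : ℝ :=
  if i = 1 then -(q 1 : ℝ) / 2 else (i : ℝ) + ∑ j ∈ Finset.Icc 1 (i - 1), (q j : ℝ)

/-- The height of the point `Q_i^+`. -/
def qPlusHt (q : ℕ → ℚ) (i : ℕ) : ℝ :=
  if i = 1 then (q 1 : ℝ) / 2 else (i : ℝ) + ∑ j ∈ Finset.Icc 1 i, (q j : ℝ)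

/-- `u` is a weak solution of `-Δu + u = μ|u|^{p-2}u` in `D`, `u ∈ H¹₀(D)`. -/
def IsWeakSolution {N : ℕ} (p : ℝ) (D : Set (Euc N)) (μ : ℝ)
    (u : Euc N → ℝ) (g : Euc N → Euc N) : Prop :=
  MemH10 D u g ∧ ∀ w : Euc N → ℝ, IsTestFun w → tsupport w ⊆ D →
    ∫ x, ((inner ℝ (g x) (gradient w x) : ℝ) + u x * w x) =
      μ * ∫ x, |u x| ^ (p - 2) * u x * w x

/-- `u` is axially symmetric: up to a.e. equality it depends only on `(|x'|, x_N)`. -/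
def AxiallySymmetric {N : ℕ} (u : Euc N → ℝ) : Prop :=
  ∃ v : ℝ → ℝ → ℝ, u =ᵐ[volume] fun x => v (primeNorm N x) (lastCoord N x)

/-- The local average `ũ(x) = (1/λ(B(x,1))) ∫_{B(x,1)} |u|`. -/
def locAvg {N : ℕ} (u : Euc N → ℝ) (x : Euc N) : ℝ :=
  (volume (Metric.ball x 1)).toReal⁻¹ * ∫ y in Metric.ball x 1, |u y|

/-- `û(x) = max(ũ(x) - (1/2) sup ũ, 0)`. -/
def hatFn {N : ℕ} (u : Euc N → ℝ) (x : Euc N) : ℝ :=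
  max (locAvg u x - (⨆ z, locAvg u z) / 2) 0

/-- The barycenter `β(u) = (∫ û(x)^p x dx) / (∫ û(x)^p dx)`. -/
def bary {N : ℕ} (p : ℝ) (u : Euc N → ℝ) : Euc N :=
  (∫ x, (hatFn u x) ^ p)⁻¹ • ∫ x, (hatFn u x) ^ p • x

/-- `Θ(q)`: the infimum of the energy over test functions supported in `S_q`. -/
def theta (N : ℕ) (p q : ℝ) : ℝ :=
  sInf { c | ∃ u : Euc N → ℝ, IsTestFun u ∧ tsupport u ⊆ strip N q 0 ∧
    pnorm p u = 1 ∧ c = ∫ x, (‖gradient u x‖ ^ 2 + (u x) ^ 2) }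

/-- The unit cube `Q_l` with integer vertex `l ∈ ℤ^N`. -/
def cube (N : ℕ) (l : Fin N → ℤ) : Set (Euc N) :=
  { x | ∀ j, (l j : ℝ) ≤ x j ∧ x j < (l j : ℝ) + 1 }

end Paper

open Paper


private lemma opnorm_le_two (L : ℝ × ℝ →L[ℝ] ℝ) :
    ‖L‖ ≤ |L (1, 0)| + |L (0, 1)| := by
  apply ContinuousLinearMap.opNorm_le_bound _ (by positivity)
  intro v
  have hv : v = v.1 • ((1 : ℝ), (0 : ℝ)) + v.2 • ((0 : ℝ), (1 : ℝ)) := by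
    ext <;> simp
  have hLv : L v = v.1 * L (1, 0) + v.2 * L (0, 1) := by
    nth_rewrite 1 [hv]
    rw [L.map_add, L.map_smul, L.map_smul, smul_eq_mul, smul_eq_mul]
  calc ‖L v‖ = |v.1 * L (1, 0) + v.2 * L (0, 1)| := by
        rw [hLv, Real.norm_eq_abs]
    _ ≤ |v.1 * L (1, 0)| + |v.2 * L (0, 1)| := abs_add_le _ _
    _ = |v.1| * |L (1, 0)| + |v.2| * |L (0, 1)| := by rw [abs_mul, abs_mul]
    _ ≤ ‖v‖ * |L (1, 0)| + ‖v‖ * |L (0, 1)| := by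
        gcongr
        · exact norm_fst_le v
        · exact norm_snd_le v
    _ = (|L (1, 0)| + |L (0, 1)|) * ‖v‖ := by ring

open Filter Topology in
/-- a `C¹` function `g` on `ℝ²` with `g(i,0) = q_i`,
`∇g(i,0) = (1/i, 1/i)` and `∂g/∂y > 0` everywhere has no critical point, yet has a
non-converging Palais–Smale sequence at every level `s ≥ 0`. -/
theorem statement19 (q : ℕ → ℚ) (hq : QBij q) (g : ℝ × ℝ → ℝ)
    (hg : ContDiff ℝ 1 g)
    (hgq : ∀ i : ℕ, 1 ≤ i → g ((i : ℝ), 0) = q i)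
    (hgd : ∀ i : ℕ, 1 ≤ i →
      fderiv ℝ g ((i : ℝ), 0) (1, 0) = 1 / i ∧ fderiv ℝ g ((i : ℝ), 0) (0, 1) = 1 / i)
    (hgy : ∀ z : ℝ × ℝ, 0 < fderiv ℝ g z (0, 1)) :
    (∀ z : ℝ × ℝ, fderiv ℝ g z ≠ 0) ∧
    ∀ s : ℝ, 0 ≤ s → ∃ z : ℕ → ℝ × ℝ,
      Tendsto (fun j => ‖z j‖) atTop atTop ∧
      Tendsto (fun j => g (z j)) atTop (𝓝 s) ∧
      Tendsto (fun j => ‖fderiv ℝ g (z j)‖) atTop (𝓝 0) := by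
  constructor
  · intro z hz
    have h := hgy z
    rw [hz] at h
    simp at h
  · intro s hs
    have hbt : ∀ j : ℕ, ∃ r : ℚ, s + 1 / (j + 2) < (r : ℝ) ∧ (r : ℝ) < s + 1 / (j + 1) := by
      intro j
      exact exists_rat_btwn (by
        have h1 : (1 : ℝ) / (j + 2) < 1 / (j + 1) :=
          one_div_lt_one_div_of_lt (by positivity) (by push_cast; linarith)
        linarith)
    choose r hr1 hr2 using hbt
    have hrpos : ∀ j, 0 < r j := by
      intro j
      have h0 : (0 : ℝ) < r j := lt_of_le_of_lt (by positivity) (hr1 j)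
      exact_mod_cast h0
    have hranti : StrictAnti r := by
      apply strictAnti_nat_of_succ_lt
      intro j
      have h1 : (r (j + 1) : ℝ) < s + 1 / (j + 2) := by
        have h := hr2 (j + 1)
        have heq : ((j : ℝ) + 1 + 1) = (j : ℝ) + 2 := by ring
        push_cast at h
        rw [heq] at h
        exact h
      have : (r (j + 1) : ℝ) < (r j : ℝ) := lt_trans h1 (hr1 j)
      exact_mod_cast this
    choose i hi1 hi2 using fun j => (hq.2 (r j) (hrpos j)).exists
    have hiinj : Function.Injective i := by
      intro a b hab
      have : r a = r b := by rw [← hi2 a, ← hi2 b, hab]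
      exact hranti.injective this
    have hitop : Tendsto i atTop atTop := by
      have := hiinj.tendsto_cofinite
      rwa [Nat.cofinite_eq_atTop] at this
    have hictop : Tendsto (fun j => (i j : ℝ)) atTop atTop :=
      tendsto_natCast_atTop_atTop.comp hitop
    refine ⟨fun j => ((i j : ℝ), 0), ?_, ?_, ?_⟩
    · apply tendsto_atTop_mono _ hictop
      intro j
      calc (i j : ℝ) = ‖(i j : ℝ)‖ := by
            rw [Real.norm_eq_abs, abs_of_nonneg (by positivity)]
        _ ≤ ‖(((i j : ℝ)), (0 : ℝ))‖ := by
            rw [Prod.norm_def]; exact le_max_left _ _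
    · have hgr : ∀ j, g ((i j : ℝ), 0) = (r j : ℝ) := by
        intro j; rw [hgq (i j) (hi1 j), hi2 j]
      simp only [hgr]
      refine tendsto_of_tendsto_of_tendsto_of_le_of_le
        (g := fun _ : ℕ => s) (h := fun j : ℕ => s + 1 / (j + 1))
        tendsto_const_nhds ?_ ?_ ?_
      · have : Tendsto (fun j : ℕ => s + 1 / (j + 1)) atTop (𝓝 (s + 0)) :=
          tendsto_const_nhds.add tendsto_one_div_add_atTop_nhds_zero_nat
        simpa using this
      · intro j; exact le_of_lt (lt_trans (lt_add_of_pos_right s (by positivity)) (hr1 j))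
      · intro j; exact le_of_lt (hr2 j)
    · have hb : ∀ j, ‖fderiv ℝ g ((i j : ℝ), 0)‖ ≤ 2 / (i j : ℝ) := by
        intro j
        obtain ⟨h1, h2⟩ := hgd (i j) (hi1 j)
        calc ‖fderiv ℝ g ((i j : ℝ), 0)‖
            ≤ |fderiv ℝ g ((i j : ℝ), 0) (1, 0)| + |fderiv ℝ g ((i j : ℝ), 0) (0, 1)| :=
              opnorm_le_two _
          _ = |1 / (i j : ℝ)| + |1 / (i j : ℝ)| := by rw [h1, h2]
          _ = 2 / (i j : ℝ) := by
              rw [abs_of_nonneg (by positivity)]; ring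
      refine tendsto_of_tendsto_of_tendsto_of_le_of_le
        (g := fun _ : ℕ => (0 : ℝ)) (h := fun j => 2 / (i j : ℝ))
        tendsto_const_nhds (tendsto_const_nhds.div_atTop hictop) ?_ hb
      intro j; exact norm_nonneg _
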